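/- Let w, k, and b be positive integers with k ≤ w. If B is a block of length k in base b+1, then N(B, P_{b,w}) ≤ w·(2^b − b)^{g_b(B)}·2^{b(w−k)} + (k−1)·(b+1)^w. -/

import Mathlib

/-!
`P_{b,w}` is the concatenation of `(b+1)^w` segments, the segment of a block `P` being `P`
repeated `(2^b - b)^{g_b(P)}` times. An occurrence of `B` either straddles two consecutive
segments (at most `k - 1` per boundary) or lies inside one segment, where it is an occurrence
of `B` at some position `r` of the cyclic word `P`. For fixed `r`, the weighted number of blocks
`P` carrying `B` cyclically at position `r` factorises over the digits: the `k` digits covered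
by `B` contribute `(2^b - b)^{g_b(B)}`, and each of the `w - k` free digits contributes
`b · 1 + (2^b - b) = 2^b`.
-/

/-- The one-digit weighting `ν_b^{(1)}`: `1/2^b` for `j < b`, `(2^b - b)/2^b` for `j = b`,
and `0` for `j > b`. -/
noncomputable def nu1 (b j : ℕ) : ℝ :=
  if j < b then 1 / 2 ^ b else if j = b then (2 ^ b - b) / 2 ^ b else 0

/-- The weighting `ν_b` of a block `B = (b_1, …, b_k)`: `∏_j ν_b^{(1)}(b_j)`. -/
noncomputable def nu (b : ℕ) (B : List ℕ) : ℝ := (B.map (nu1 b)).prod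

/-- The `i`-th (0-indexed) block of length `w` in base `b`, in lexicographic order. -/
def lexBlock (b w i : ℕ) : List ℕ :=
  (List.range w).map (fun j => i / b ^ (w - 1 - j) % b)

/-- The block `P_{b,w}`: running over the blocks `P` of length `w` in base `b+1` in
lexicographic order, concatenate `2^{bw}·ν_b(P) = (2^b - b)^{g_b(P)}` copies of each `P`. -/
def Pblock (b w : ℕ) : List ℕ :=
  ((List.range ((b + 1) ^ w)).map fun i =>
    (List.replicate ((2 ^ b - b) ^ ((lexBlock (b + 1) w i).count b))
      (lexBlock (b + 1) w i)).flatten).flatten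

/-- `numOcc B y` is the number of occurrences of the block `B` as a contiguous
subblock of the block `y`. -/
def numOcc (B y : List ℕ) : ℕ :=
  ((List.range (y.length + 1)).filter (fun i => B.isPrefixOf (y.drop i))).length

open Finset Function

theorem numOcc_eq_card (B y : List ℕ) :
    numOcc B y = #{i ∈ range (y.length + 1) | B <+: y.drop i} := by
  have h (i : ℕ) : B.isPrefixOf (y.drop i) = decide (B <+: y.drop i) :=
    Bool.eq_iff_iff.2 (by simp [List.isPrefixOf_iff_prefix])
  simp only [numOcc, h]
  rfl

theorem numOcc_nil {B : List ℕ} (hB : B ≠ []) : numOcc B [] = 0 := by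
  simpa [numOcc_eq_card] using hB

theorem numOcc_append_le {B : List ℕ} (hB : B ≠ []) (x y : List ℕ) :
    numOcc B (x ++ y) ≤ numOcc B x + numOcc B y + (B.length - 1) := by
  have hk := List.length_pos_iff.2 hB
  simp only [numOcc_eq_card]
  have hsub : {i ∈ range ((x ++ y).length + 1) | B <+: (x ++ y).drop i} ⊆
      {i ∈ range (x.length + 1) | B <+: x.drop i} ∪
      ({i ∈ range (y.length + 1) | B <+: y.drop i}.map (addRightEmbedding x.length) ∪
      Ico (x.length + 1 - B.length) x.length) := by
    intro i hi
    simp only [mem_filter, mem_range, List.length_append] at hi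
    obtain ⟨hi, hpre⟩ := hi
    simp only [mem_union, mem_filter, mem_range, mem_map, addRightEmbedding_apply, mem_Ico]
    rcases le_or_gt x.length i with hxi | hxi
    · refine Or.inr (Or.inl ⟨i - x.length, ⟨by omega, ?_⟩, by omega⟩)
      rwa [List.drop_append, List.drop_of_length_le hxi, List.nil_append] at hpre
    · by_cases hfit : i + B.length ≤ x.length
      · refine Or.inl ⟨by omega, List.prefix_of_prefix_length_le hpre ?_ (by simp only [List.length_drop]; omega)⟩
        rw [List.drop_append_of_le_length hxi.le]
        exact List.prefix_append _ _
      · exact Or.inr (Or.inr ⟨by omega, hxi⟩)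
  refine (card_le_card hsub).trans ((card_union_le _ _).trans ?_)
  grw [card_union_le, card_map, Nat.card_Ico]
  omega

theorem numOcc_flatten_le {B : List ℕ} (hB : B ≠ []) (L : List (List ℕ)) :
    numOcc B L.flatten ≤ (L.map (numOcc B)).sum + (B.length - 1) * L.length := by
  induction L with
  | nil => simp [numOcc_nil hB]
  | cons l L ih =>
    grw [List.flatten_cons, numOcc_append_le hB, ih]
    simp only [List.map_cons, List.sum_cons, List.length_cons, Nat.mul_succ]
    omega

namespace List

variable {α : Type*}

theorem getElem_flatten_replicate (P : List α) (m n : ℕ)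
    (h : n < (replicate m P).flatten.length) :
    (replicate m P).flatten[n] = P[n % P.length]'(Nat.mod_lt _ (by
      rcases P with _ | _ <;> simp_all)) := by
  induction m generalizing n with
  | zero => simp at h
  | succ m ih =>
    simp only [replicate_succ, flatten_cons]
    by_cases hn : n < P.length
    · simp [getElem_append_left hn, Nat.mod_eq_of_lt hn]
    · have hn' : P.length ≤ n := by omega
      simp only [getElem_append_right hn', ih, ← Nat.mod_eq_sub_mod hn']

theorem prefix_drop_append_self_of_prefix_drop_flatten_replicate {B P : List α} {m i : ℕ}
    (hBP : B.length ≤ P.length) (h : B <+: ((replicate m P).flatten).drop i) :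
    B <+: (P ++ P).drop (i % P.length) := by
  obtain ⟨_, hget⟩ := prefix_iff_getElem.1 h
  have hP : P ++ P = (replicate 2 P).flatten := by simp
  rw [hP, prefix_iff_getElem]
  refine ⟨?_, fun t ht => ?_⟩
  · rcases P.length.eq_zero_or_pos with hw | hw
    · simp_all
    · have := Nat.mod_lt i hw
      simp only [length_drop, length_flatten, map_replicate, sum_replicate, smul_eq_mul]
      omega
  · simp only [hget t ht, getElem_drop, getElem_flatten_replicate, Nat.mod_add_mod]

theorem ofFn_prefix_drop_ofFn_append_ofFn_iff {w k : ℕ} {g : Fin w → α} {u : Fin k → α}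
    (hkw : k ≤ w) (r : Fin w) :
    ofFn u <+: (ofFn g ++ ofFn g).drop r ↔ g ∘ (fun t => r + Fin.castLE hkw t) = u := by
  have hP : ofFn g ++ ofFn g = (replicate 2 (ofFn g)).flatten := by simp
  rw [hP, prefix_iff_getElem, funext_iff]
  simp only [length_ofFn, length_drop, length_flatten, map_replicate, sum_replicate,
    smul_eq_mul, List.getElem_ofFn, getElem_drop, getElem_flatten_replicate, comp_apply]
  refine ⟨fun ⟨_, h⟩ t => ?_, fun h => ⟨by omega, fun t ht => ?_⟩⟩
  · exact (h t t.isLt).symm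
  · exact (h ⟨t, ht⟩).symm

end List

def cyclicOcc {α : Type*} [DecidableEq α] (B P : List α) : Finset ℕ :=
  {r ∈ range P.length | B <+: (P ++ P).drop r}

theorem numOcc_flatten_replicate_le {B P : List ℕ} (hB : B ≠ []) (hBP : B.length ≤ P.length)
    (m : ℕ) : numOcc B (List.replicate m P).flatten ≤ m * #(cyclicOcc B P) := by
  have hk := List.length_pos_iff.2 hB
  have hw : 0 < P.length := hk.trans_le hBP
  calc numOcc B (List.replicate m P).flatten ≤ #(range m ×ˢ cyclicOcc B P) := by
        rw [numOcc_eq_card]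
        refine card_le_card_of_injOn (fun i => (i / P.length, i % P.length)) (fun i hi => ?_)
          (fun i _ j _ hij => ?_)
        · simp only [coe_filter, mem_range, Set.mem_ofPred_eq] at hi
          obtain ⟨-, hpre⟩ := hi
          have hlen := hpre.length_le
          simp only [List.length_drop, List.length_flatten, List.map_replicate,
            List.sum_replicate, smul_eq_mul] at hlen
          simp only [coe_product, coe_range, Set.mem_prod, Set.mem_Iio, cyclicOcc, coe_filter,
            mem_range, Set.mem_ofPred_eq]
          exact ⟨(Nat.div_lt_iff_lt_mul hw).2 (by omega),
            Nat.mod_lt _ hw, List.prefix_drop_append_self_of_prefix_drop_flatten_replicate hBP hpre⟩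
        · simp only [Prod.mk.injEq] at hij
          rw [← Nat.div_add_mod i P.length, ← Nat.div_add_mod j P.length, hij.1, hij.2]
    _ = m * #(cyclicOcc B P) := by rw [card_product, card_range]

theorem Fintype.sum_filter_comp_eq_prod {ι κ α R : Type*} [Fintype ι] [DecidableEq ι] [Fintype κ]
    [Fintype α] [DecidableEq α] [CommSemiring R] {σ : κ → ι} (hσ : Injective σ) (v : κ → α)
    (wt : α → R) :
    ∑ f : ι → α with f ∘ σ = v, ∏ j, wt (f j) =
      (∏ t, wt (v t)) * (∑ d, wt d) ^ (Fintype.card ι - Fintype.card κ) := by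
  let allowed (j : ι) (d : α) : Prop := ∀ t, σ t = j → v t = d
  have hterm (f : ι → α) :
      (if f ∘ σ = v then ∏ j, wt (f j) else 0) = ∏ j, if allowed j (f j) then wt (f j) else 0 := by
    rw [Fintype.prod_ite_zero]
    congr 1
    simp only [allowed, funext_iff, comp_apply]
    exact propext ⟨fun h j t htj => htj ▸ (h t).symm, fun h t => (h _ t rfl).symm⟩
  rw [sum_filter, Fintype.sum_congr _ _ hterm,
    ← Fintype.prod_sum (κ := fun _ => α) (fun j d => if allowed j d then wt d else 0),
    ← prod_mul_prod_compl (univ.image σ), prod_image hσ.injOn]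
  congr 1
  · refine Fintype.prod_congr _ _ fun t => ?_
    simp [allowed, hσ.eq_iff]
  · have hfree (j) (hj : j ∈ (univ.image σ)ᶜ) (d : α) : allowed j d := by
      simp only [mem_compl, mem_image, mem_univ, true_and, not_exists] at hj
      exact fun t ht => absurd ht (hj t)
    rw [Finset.prod_congr rfl fun j hj => Finset.sum_congr rfl fun d _ => if_pos (hfree j hj d),
      prod_const, card_compl, card_image_of_injective _ hσ, card_univ]

theorem lexBlock_length (c w i : ℕ) : (lexBlock c w i).length = w := by simp [lexBlock]

theorem lexBlock_eq_ofFn (c w : ℕ) (i : Fin (c ^ w)) :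
    lexBlock c w i = List.ofFn fun j => (finFunctionFinEquiv.symm i j.rev : ℕ) := by
  apply List.ext_getElem (by simp [lexBlock])
  intro n _ _
  simp [lexBlock, finFunctionFinEquiv, Nat.sub_sub, Nat.add_comm 1 n]

theorem sum_lexBlock {M : Type*} [AddCommMonoid M] (c w : ℕ) (F : List ℕ → M) :
    ∑ i ∈ range (c ^ w), F (lexBlock c w i) =
      ∑ f : Fin w → Fin c, F (List.ofFn fun j => (f j : ℕ)) := by
  rw [Finset.sum_range (fun i => F (lexBlock c w i)), ← finFunctionFinEquiv.sum_comp,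
    ← (Fin.revPerm.arrowCongr (Equiv.refl (Fin c))).sum_comp]
  simp only [lexBlock_eq_ofFn, Equiv.symm_apply_apply]
  simp

/-- `2 ^ b * ν_b^{(1)}(d)` for `d ≤ b`. -/
def digitWeight (b d : ℕ) : ℕ := if d = b then 2 ^ b - b else 1

theorem pow_count_eq_prod_map_digitWeight (b : ℕ) (L : List ℕ) :
    (2 ^ b - b) ^ L.count b = (L.map (digitWeight b)).prod := by
  rw [List.prod_map_eq_pow_single b (digitWeight b) fun d hd _ => if_neg hd, digitWeight,
    if_pos rfl]

theorem sum_digitWeight (b : ℕ) : ∑ d : Fin (b + 1), digitWeight b d = 2 ^ b := by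
  have hb : b ≤ 2 ^ b := Nat.lt_two_pow_self.le
  simp [Fin.sum_univ_castSucc, digitWeight, (Fin.is_lt _).ne]
  omega

theorem sum_lexBlock_pow_count_of_prefix_drop {b w r : ℕ} (hr : r < w) {B : List ℕ}
    (hBw : B.length ≤ w) (hbase : ∀ d ∈ B, d < b + 1) :
    ∑ i ∈ range ((b + 1) ^ w),
        (if B <+: (lexBlock (b + 1) w i ++ lexBlock (b + 1) w i).drop r
          then (2 ^ b - b) ^ (lexBlock (b + 1) w i).count b else 0) =
      (2 ^ b - b) ^ B.count b * 2 ^ (b * (w - B.length)) := by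
  let v (t : Fin B.length) : Fin (b + 1) := ⟨B[t], hbase _ (List.getElem_mem _)⟩
  have hB : B = List.ofFn fun t => (v t : ℕ) := List.ofFn_getElem.symm
  let σ (t : Fin B.length) : Fin w := ⟨r, hr⟩ + Fin.castLE hBw t
  have hσ : Injective σ := (add_right_injective _).comp (Fin.castLE_injective hBw)
  have hocc (f : Fin w → Fin (b + 1)) :
      B <+: (List.ofFn (fun j => (f j : ℕ)) ++ List.ofFn fun j => (f j : ℕ)).drop r ↔
        f ∘ σ = v := by
    conv_lhs => rw [hB]
    rw [List.ofFn_prefix_drop_ofFn_append_ofFn_iff hBw ⟨r, hr⟩]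
    exact Fin.val_injective.comp_left.eq_iff
  rw [sum_lexBlock (b + 1) w fun P => if B <+: (P ++ P).drop r then (2 ^ b - b) ^ P.count b else 0]
  simp only [hocc, pow_count_eq_prod_map_digitWeight, List.map_ofFn, List.prod_ofFn, comp_apply]
  rw [← sum_filter, Fintype.sum_filter_comp_eq_prod hσ v fun d => digitWeight b d,
    sum_digitWeight, Fintype.card_fin, Fintype.card_fin, ← pow_mul]
  conv_rhs => rw [hB]
  simp [List.map_ofFn, List.prod_ofFn]

theorem stmt3_general (w k b : ℕ) (hk : 0 < k) (hkw : k ≤ w)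
    (B : List ℕ) (hlen : B.length = k) (hbase : ∀ d ∈ B, d < b + 1) :
    numOcc B (Pblock b w) ≤
      w * (2 ^ b - b) ^ B.count b * 2 ^ (b * (w - k)) + (k - 1) * (b + 1) ^ w := by
  subst hlen
  have hB : B ≠ [] := List.ne_nil_of_length_pos hk
  let P (i : ℕ) : List ℕ := lexBlock (b + 1) w i
  let m (i : ℕ) : ℕ := (2 ^ b - b) ^ (P i).count b
  have hsegment (i : ℕ) : numOcc B (List.replicate (m i) (P i)).flatten ≤
      ∑ r ∈ range w, if B <+: (P i ++ P i).drop r then m i else 0 := by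
    grw [numOcc_flatten_replicate_le hB (hkw.trans_eq (lexBlock_length _ _ _).symm)]
    rw [cyclicOcc, card_filter, mul_sum, lexBlock_length]
    simp only [mul_ite, mul_one, mul_zero]
    exact le_rfl
  calc numOcc B (Pblock b w)
      ≤ ∑ i ∈ range ((b + 1) ^ w), numOcc B (List.replicate (m i) (P i)).flatten
          + (B.length - 1) * (b + 1) ^ w := by
        refine (numOcc_flatten_le hB ((List.range ((b + 1) ^ w)).map fun i =>
          (List.replicate (m i) (P i)).flatten)).trans_eq ?_
        simp [comp_def, Finset.sum_eq_multiset_sum, Multiset.range]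
    _ ≤ ∑ r ∈ range w, ∑ i ∈ range ((b + 1) ^ w), (if B <+: (P i ++ P i).drop r then m i else 0)
          + (B.length - 1) * (b + 1) ^ w := by
        grw [sum_le_sum fun i _ => hsegment i, sum_comm]
    _ = _ := by
        rw [sum_congr rfl fun r hr => sum_lexBlock_pow_count_of_prefix_drop (mem_range.1 hr) hkw
          hbase, sum_const, card_range, smul_eq_mul, mul_assoc]

/-- If `w, k, b` are positive integers with `k ≤ w` and `B` is a block of length `k`
in base `b+1`, then `N(B, P_{b,w}) ≤ w·(2^b - b)^{g_b(B)}·2^{b(w-k)} + (k-1)·(b+1)^w`. -/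
theorem stmt3 (w k b : ℕ) (hw : 0 < w) (hk : 0 < k) (hb : 0 < b) (hkw : k ≤ w)
    (B : List ℕ) (hlen : B.length = k) (hbase : ∀ d ∈ B, d < b + 1) :
    numOcc B (Pblock b w) ≤
      w * (2 ^ b - b) ^ B.count b * 2 ^ (b * (w - k)) + (k - 1) * (b + 1) ^ w :=
  stmt3_general w k b hk hkw B hlen hbase
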